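/- arXiv:2107.05518 — 10 statements merged into one kernel-verified Lean document; each statement's English description precedes it below -/
import Mathlib

section
/- For all x in [0, 2], arccos(1 - x) ≤ π·sqrt(x/2). -/
/-! With `t = √(x / 2) ∈ [0, 1]`, the quadratic upper bound `cos y ≤ 1 - 2 y² / π²` on `[-π, π]`
gives `cos (π t) ≤ 1 - 2 t² = 1 - x`, and `arccos` is antitone. -/

open Real

theorem Real.arccos_le_of_cos_le {x y : ℝ} (hy₀ : 0 ≤ y) (hy : y ≤ π) (h : cos y ≤ x) :
    arccos x ≤ y :=
  (arccos_le_arccos h).trans_eq (arccos_cos hy₀ hy)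

theorem arccos_one_sub_le (x : ℝ) (hx0 : 0 ≤ x) (hx2 : x ≤ 2) :
    Real.arccos (1 - x) ≤ Real.pi * Real.sqrt (x / 2) := by
  set t := √(x / 2)
  have ht₀ : 0 ≤ t := sqrt_nonneg _
  have ht₁ : t ≤ 1 := sqrt_le_one.mpr (by linarith)
  have ht_sq : t ^ 2 = x / 2 := sq_sqrt (by linarith)
  have hπt : π * t ≤ π := mul_le_of_le_one_right pi_pos.le ht₁
  apply arccos_le_of_cos_le (by positivity) hπt
  calc cos (π * t) ≤ 1 - 2 / π ^ 2 * (π * t) ^ 2 :=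
        cos_le_one_sub_mul_cos_sq (by rw [abs_of_nonneg (by positivity)]; exact hπt)
    _ = 1 - x := by field_simp; rw [ht_sq]; ring
end

section
/- For all x in [0, 2], arccos(1 - x) ≥ sqrt(2x). -/
open Real

theorem two_mul_one_sub_le_sq_arccos {y : ℝ} (hy₁ : -1 ≤ y) (hy₂ : y ≤ 1) :
    2 * (1 - y) ≤ arccos y ^ 2 := by
  have h := one_sub_sq_div_two_le_cos (x := arccos y)
  rw [cos_arccos hy₁ hy₂] at h
  linarith

theorem arccos_one_sub_ge (x : ℝ) (hx0 : 0 ≤ x) (hx2 : x ≤ 2) :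
    Real.sqrt (2 * x) ≤ Real.arccos (1 - x) := by
  rw [Real.sqrt_le_left (arccos_nonneg _)]
  simpa using two_mul_one_sub_le_sq_arccos (y := 1 - x) (by linarith) (by linarith)
end

section
/- Let R > 0 and r₁, r₂ ∈ (0, R] with r₁ + r₂ ≥ R. Then (cosh(r₁)·cosh(r₂) − cosh(R)) / (sinh(r₁)·sinh(r₂)) ≥ 1 − 2·e^{R − r₁ − r₂}. -/
/-!
With `u = exp (R - r₁ - r₂) ≤ 1`, clearing the denominator `sinh r₁ * sinh r₂ > 0` turns the
difference of the two sides into `(1 - u) * (cosh (r₁ - r₂) - (1 + u) * exp (-R) / 2)`, and the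
second factor is nonnegative because `cosh ≥ 1` while `(1 + u) * exp (-R) / 2 ≤ 1`.
-/

open Real

theorem cosh_mul_cosh_sub_cosh_sub_mul_sinh_mul_sinh (R a b : ℝ) :
    cosh a * cosh b - cosh R - (1 - 2 * exp (R - a - b)) * (sinh a * sinh b) =
      (1 - exp (R - a - b)) * (cosh (a - b) - (1 + exp (R - a - b)) * exp (-R) / 2) := by
  simp only [cosh_eq, sinh_eq, exp_sub, exp_neg]
  field_simp
  ring

theorem one_sub_two_exp_mul_sinh_mul_sinh_le {R a b : ℝ} (hR : 0 ≤ R) (hab : R ≤ a + b) :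
    (1 - 2 * exp (R - a - b)) * (sinh a * sinh b) ≤ cosh a * cosh b - cosh R := by
  rw [← sub_nonneg, cosh_mul_cosh_sub_cosh_sub_mul_sinh_mul_sinh]
  have hu : exp (R - a - b) ≤ 1 := exp_le_one_iff.2 (by linarith)
  have hv : exp (-R) ≤ 1 := exp_le_one_iff.2 (by linarith)
  have hcosh : 1 ≤ cosh (a - b) := one_le_cosh _
  apply mul_nonneg (sub_nonneg.2 hu)
  nlinarith [exp_pos (-R)]

theorem cos_theta_lower_bound (R r₁ r₂ : ℝ) (hR : 0 < R)
    (hr₁ : r₁ ∈ Set.Ioc 0 R) (hr₂ : r₂ ∈ Set.Ioc 0 R) (hsum : R ≤ r₁ + r₂) :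
    1 - 2 * Real.exp (R - r₁ - r₂) ≤
      (Real.cosh r₁ * Real.cosh r₂ - Real.cosh R) / (Real.sinh r₁ * Real.sinh r₂) := by
  have hsinh : 0 < sinh r₁ * sinh r₂ := mul_pos (sinh_pos_iff.2 hr₁.1) (sinh_pos_iff.2 hr₂.1)
  rw [le_div_iff₀ hsinh]
  exact one_sub_two_exp_mul_sinh_mul_sinh_le hR.le hsum
end

section
/- Let R > 0 and r₁, r₂ ∈ (0, R] with r₁ + r₂ ≥ R. Then (cosh(r₁)·cosh(r₂) − cosh(R)) / (sinh(r₁)·sinh(r₂)) ≤ 1 − 2·(e^{R − r₁ − r₂} + e^{−R − r₁ − r₂} − e^{−2r₁} − e^{−2r₂}). -/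
/-!
Since `cosh r₁ cosh r₂ = sinh r₁ sinh r₂ + cosh (r₁ - r₂)`, both sides are `1` minus a multiple of
the gap `cosh R - cosh (r₁ - r₂) ≥ 0`: the left side with factor `1 / (sinh r₁ sinh r₂)`, the right
side with factor `4 e^{-(r₁ + r₂)}`. The first factor is the larger one because
`4 sinh r₁ sinh r₂ ≤ e^{r₁ + r₂}`.
-/

open Real

theorem four_mul_sinh_mul_sinh_le_exp_add {a b : ℝ} (hab : 0 ≤ a + b) :
    4 * sinh a * sinh b ≤ exp (a + b) := by
  have hcosh : 2 * cosh (a + b) = exp (a + b) + exp (-(a + b)) := by rw [cosh_eq]; ring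
  have hprod : 4 * sinh a * sinh b = 2 * cosh (a + b) - 2 * cosh (a - b) := by
    rw [cosh_add, cosh_sub]; ring
  have hexp : exp (-(a + b)) ≤ 1 := exp_le_one_iff.2 (neg_nonpos.2 hab)
  linarith [one_le_cosh (a - b)]

theorem four_mul_exp_neg_add_mul_cosh_sub_cosh (R a b : ℝ) :
    4 * exp (-(a + b)) * (cosh R - cosh (a - b)) =
      2 * (exp (R - a - b) + exp (-R - a - b) - exp (-(2 * a)) - exp (-(2 * b))) := by
  simp only [cosh_eq, sub_eq_add_neg, neg_add, neg_neg, two_mul, exp_add, exp_neg]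
  field_simp
  ring

theorem cos_theta_upper_bound_general (R r₁ r₂ : ℝ)
    (hr₁ : r₁ ∈ Set.Ioc 0 R) (hr₂ : r₂ ∈ Set.Ioc 0 R) :
    (Real.cosh r₁ * Real.cosh r₂ - Real.cosh R) / (Real.sinh r₁ * Real.sinh r₂) ≤
      1 - 2 * (Real.exp (R - r₁ - r₂) + Real.exp (-R - r₁ - r₂)
        - Real.exp (-(2 * r₁)) - Real.exp (-(2 * r₂))) := by
  obtain ⟨h₁, h₁R⟩ := hr₁
  obtain ⟨h₂, h₂R⟩ := hr₂
  have hsinh : 0 < sinh r₁ * sinh r₂ := mul_pos (sinh_pos_iff.2 h₁) (sinh_pos_iff.2 h₂)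
  have hgap : 0 ≤ cosh R - cosh (r₁ - r₂) := by
    refine sub_nonneg.2 (cosh_le_cosh.2 ?_)
    rw [abs_of_nonneg (by linarith : 0 ≤ R), abs_le]
    constructor <;> linarith
  have hexp : 4 * exp (-(r₁ + r₂)) * (sinh r₁ * sinh r₂) ≤ 1 := by
    have hsinh_le := four_mul_sinh_mul_sinh_le_exp_add (by linarith : 0 ≤ r₁ + r₂)
    calc 4 * exp (-(r₁ + r₂)) * (sinh r₁ * sinh r₂)
        = exp (-(r₁ + r₂)) * (4 * sinh r₁ * sinh r₂) := by ring
      _ ≤ exp (-(r₁ + r₂)) * exp (r₁ + r₂) := by gcongr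
      _ = 1 := by rw [← exp_add, neg_add_cancel, exp_zero]
  calc (cosh r₁ * cosh r₂ - cosh R) / (sinh r₁ * sinh r₂)
      = 1 - (cosh R - cosh (r₁ - r₂)) / (sinh r₁ * sinh r₂) := by
        rw [cosh_sub]; field_simp; ring
    _ ≤ 1 - 4 * exp (-(r₁ + r₂)) * (cosh R - cosh (r₁ - r₂)) := by
        gcongr
        rw [le_div_iff₀ hsinh]
        nlinarith [mul_le_mul_of_nonneg_left hexp hgap]
    _ = _ := by rw [four_mul_exp_neg_add_mul_cosh_sub_cosh]

theorem cos_theta_upper_bound (R r₁ r₂ : ℝ) (hR : 0 < R)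
    (hr₁ : r₁ ∈ Set.Ioc 0 R) (hr₂ : r₂ ∈ Set.Ioc 0 R) (hsum : R ≤ r₁ + r₂) :
    (Real.cosh r₁ * Real.cosh r₂ - Real.cosh R) / (Real.sinh r₁ * Real.sinh r₂) ≤
      1 - 2 * (Real.exp (R - r₁ - r₂) + Real.exp (-R - r₁ - r₂)
        - Real.exp (-(2 * r₁)) - Real.exp (-(2 * r₂))) :=
  cos_theta_upper_bound_general R r₁ r₂ hr₁ hr₂
end

section
/- Let R > 0 and r₁, r₂ ∈ (0, R] with r₁ + r₂ ≥ R, and define θ(r₁, r₂) = arccos((cosh(r₁)·cosh(r₂) − cosh(R))/(sinh(r₁)·sinh(r₂))). Then θ(r₁, r₂) ≤ π·sqrt(e^{R − r₁ − r₂}). -/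
/-!
With `a = r₁ + r₂` and `s = √(exp (R - a)) ∈ (0, 1]`, the argument `x` of `arccos` satisfies
`x ≥ 1 - 2 s²`: by the addition formulas for `cosh` this reduces to
`cosh R - 1 ≤ exp (R - a) (cosh a - 1)`, which holds because `exp (-t) (cosh t - 1) = (1 - exp (-t))² / 2`
is increasing for `t ≥ 0`. The quadratic bound `cos (π s) ≤ 1 - 2 s²` then gives
`cos (π s) ≤ x`, and `arccos` is antitone, so `arccos x ≤ π s`.
-/

open Real

namespace Real

theorem exp_neg_mul_cosh_sub_one (t : ℝ) :
    exp (-t) * (cosh t - 1) = (1 - exp (-t)) ^ 2 / 2 := by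
  have hmul : exp (-t) * exp t = 1 := by rw [← exp_add, neg_add_cancel, exp_zero]
  rw [cosh_eq]
  linear_combination (1 / 2 : ℝ) * hmul

theorem cosh_sub_one_le_exp_sub_mul {R a : ℝ} (hR : 0 ≤ R) (ha : R ≤ a) :
    cosh R - 1 ≤ exp (R - a) * (cosh a - 1) := by
  have hmono : exp (-R) * (cosh R - 1) ≤ exp (-a) * (cosh a - 1) := by
    rw [exp_neg_mul_cosh_sub_one, exp_neg_mul_cosh_sub_one]
    have hR' : 0 ≤ 1 - exp (-R) := sub_nonneg.2 (exp_le_one_iff.2 (neg_nonpos.2 hR))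
    have ha' : exp (-a) ≤ exp (-R) := exp_le_exp.2 (neg_le_neg ha)
    gcongr
  calc cosh R - 1 = exp R * (exp (-R) * (cosh R - 1)) := by
        rw [← mul_assoc, ← exp_add, add_neg_cancel, exp_zero, one_mul]
    _ ≤ exp R * (exp (-a) * (cosh a - 1)) := by gcongr
    _ = exp (R - a) * (cosh a - 1) := by rw [← mul_assoc, ← exp_add, ← sub_eq_add_neg]

theorem one_sub_two_exp_le_div_sinh_mul_sinh {R r₁ r₂ : ℝ} (hR : 0 ≤ R) (hr₁ : 0 < r₁)
    (hr₂ : 0 < r₂) (hsum : R ≤ r₁ + r₂) :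
    1 - 2 * exp (R - r₁ - r₂) ≤ (cosh r₁ * cosh r₂ - cosh R) / (sinh r₁ * sinh r₂) := by
  have hden : 0 < sinh r₁ * sinh r₂ := mul_pos (sinh_pos_iff.2 hr₁) (sinh_pos_iff.2 hr₂)
  have he : exp (R - (r₁ + r₂)) ≤ 1 := exp_le_one_iff.2 (by linarith)
  have hkey := cosh_sub_one_le_exp_sub_mul hR hsum
  -- `cosh (r₁ ± r₂) = cosh r₁ cosh r₂ ± sinh r₁ sinh r₂`, and `cosh (r₁ - r₂) ≥ 1` absorbs the rest
  have hdiff : 0 ≤ (1 - exp (R - (r₁ + r₂))) * (cosh (r₁ - r₂) - 1) :=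
    mul_nonneg (sub_nonneg.2 he) (sub_nonneg.2 (one_le_cosh _))
  rw [cosh_add] at hkey
  rw [cosh_sub] at hdiff
  rw [sub_sub, le_div_iff₀ hden]
  linarith

theorem cos_pi_mul_le_one_sub_two_mul_sq {s : ℝ} (hs : |s| ≤ 1) :
    cos (π * s) ≤ 1 - 2 * s ^ 2 := by
  have hbound := cos_le_one_sub_mul_cos_sq (x := π * s) (by
    rw [abs_mul, abs_of_pos pi_pos]
    exact mul_le_of_le_one_right pi_pos.le hs)
  convert hbound using 2
  field_simp

end Real

theorem theta_upper_bound (R r₁ r₂ : ℝ) (hR : 0 < R)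
    (hr₁ : r₁ ∈ Set.Ioc 0 R) (hr₂ : r₂ ∈ Set.Ioc 0 R) (hsum : R ≤ r₁ + r₂) :
    Real.arccos ((Real.cosh r₁ * Real.cosh r₂ - Real.cosh R) /
        (Real.sinh r₁ * Real.sinh r₂)) ≤
      Real.pi * Real.sqrt (Real.exp (R - r₁ - r₂)) := by
  set s := √(exp (R - r₁ - r₂))
  have hs₀ : 0 ≤ s := sqrt_nonneg _
  have hs₁ : s ≤ 1 := sqrt_le_one.2 (exp_le_one_iff.2 (by linarith))
  have hcos : cos (π * s) ≤ (cosh r₁ * cosh r₂ - cosh R) / (sinh r₁ * sinh r₂) := by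
    calc cos (π * s) ≤ 1 - 2 * s ^ 2 :=
          cos_pi_mul_le_one_sub_two_mul_sq (abs_le.2 ⟨by linarith, hs₁⟩)
      _ = 1 - 2 * exp (R - r₁ - r₂) := by rw [sq_sqrt (exp_pos _).le]
      _ ≤ _ := one_sub_two_exp_le_div_sinh_mul_sinh hR.le hr₁.1 hr₂.1 hsum
  calc arccos _ ≤ arccos (cos (π * s)) := arccos_le_arccos hcos
    _ = π * s := arccos_cos (by positivity) (mul_le_of_le_one_right pi_pos.le hs₁)
end

section
/- Let R ≥ 1 and r₁, r₂ ∈ (0, R] with r₁ + r₂ ≥ R and |r₁ − r₂| ≤ R − 1, and define θ(r₁, r₂) = arccos((cosh(r₁)·cosh(r₂) − cosh(R))/(sinh(r₁)·sinh(r₂))). Then sqrt(e^{R − r₁ − r₂}) ≤ θ(r₁, r₂) ≤ π·sqrt(e^{R − r₁ − r₂}). -/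
/-!
Write `u = exp (R - r₁ - r₂) ≤ 1` and `x` for the argument of `arccos`. From
`2 sinh r₁ sinh r₂ = cosh (r₁ + r₂) - cosh (r₁ - r₂)` and the identity
`cosh R - u cosh (r₁ + r₂) = exp (-R) (1 - u²) / 2` one gets `u / 2 ≤ 1 - x ≤ 2 u`; the lower
estimate needs `4 cosh (r₁ - r₂) ≤ 3 cosh R`, which is where `|r₁ - r₂| ≤ R - 1` enters.
With `t = √u`, the two bounds on `arccos x` then follow from `1 - t² / 2 ≤ cos t` and from
`cos (π t) ≤ 1 - 2 t²`, a consequence of Jordan's inequality `t ≤ sin (π t / 2)`.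
-/

open Real

lemma le_arccos_of_sq_div_two_le_one_sub {t x : ℝ} (ht₀ : 0 ≤ t) (htπ : t ≤ π)
    (h : t ^ 2 / 2 ≤ 1 - x) : t ≤ arccos x :=
  calc t = arccos (cos t) := (arccos_cos ht₀ htπ).symm
    _ ≤ arccos x := arccos_le_arccos (by linarith [one_sub_sq_div_two_le_cos (x := t)])

lemma cos_pi_mul_le_one_sub_two_mul_sq {t : ℝ} (ht₀ : 0 ≤ t) (ht₁ : t ≤ 1) :
    cos (π * t) ≤ 1 - 2 * t ^ 2 := by
  have hsin : t ≤ sin (π * t / 2) := by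
    have hJordan := mul_le_sin (x := π * t / 2) (by positivity) (by nlinarith [pi_pos])
    rwa [show 2 / π * (π * t / 2) = t by field_simp] at hJordan
  have hcos : cos (π * t) = 1 - 2 * sin (π * t / 2) ^ 2 := by
    rw [← cos_two_mul_eq_one_sub]; ring_nf
  rw [hcos]
  nlinarith

lemma arccos_le_pi_mul_of_one_sub_le_two_mul_sq {t x : ℝ} (ht₀ : 0 ≤ t) (ht₁ : t ≤ 1)
    (h : 1 - x ≤ 2 * t ^ 2) : arccos x ≤ π * t :=
  calc arccos x ≤ arccos (cos (π * t)) :=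
        arccos_le_arccos (by linarith [cos_pi_mul_le_one_sub_two_mul_sq ht₀ ht₁])
    _ = π * t := arccos_cos (by positivity) (by nlinarith [pi_pos])

lemma cosh_sub_mul_cosh_le {a b : ℝ} (hb : 0 ≤ b) (hba : b ≤ a) :
    cosh (a - b) * cosh b ≤ cosh a := by
  have hsum : cosh a = cosh (a - b) * cosh b + sinh (a - b) * sinh b := by
    rw [← cosh_add, sub_add_cancel]
  have hdiff : cosh (a - 2 * b) = cosh (a - b) * cosh b - sinh (a - b) * sinh b := by
    rw [← cosh_sub]; ring_nf
  have hle : cosh (a - 2 * b) ≤ cosh a :=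
    cosh_le_cosh.2 (abs_le_abs (by linarith) (by linarith))
  linarith

lemma four_mul_cosh_le_three_mul_cosh {R d : ℝ} (hR : 1 ≤ R) (hd : |d| ≤ R - 1) :
    4 * cosh d ≤ 3 * cosh R := by
  have hcosh_one : 4 / 3 ≤ cosh 1 := by
    rw [cosh_eq]; linarith [exp_one_gt_d9, exp_pos (-1)]
  have hd' : cosh d ≤ cosh (R - 1) :=
    cosh_le_cosh.2 (by rwa [abs_of_nonneg (by linarith : (0 : ℝ) ≤ R - 1)])
  nlinarith [cosh_sub_mul_cosh_le zero_le_one hR, cosh_pos (R - 1)]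

lemma cosh_sub_exp_sub_mul_cosh (R s : ℝ) :
    cosh R - exp (R - s) * cosh s = exp (-R) * (1 - exp (R - s) ^ 2) / 2 := by
  rw [cosh_eq, cosh_eq, exp_sub, exp_neg, exp_neg]
  field_simp
  ring

lemma exp_sub_mul_cosh_le_cosh {R s : ℝ} (h : R ≤ s) : exp (R - s) * cosh s ≤ cosh R := by
  have hu : exp (R - s) ≤ 1 := exp_le_one_iff.2 (by linarith)
  have hu_sq : 0 ≤ 1 - exp (R - s) ^ 2 := sub_nonneg.2 (pow_le_one₀ (exp_pos _).le hu)
  linarith [cosh_sub_exp_sub_mul_cosh R s, mul_nonneg (exp_pos (-R)).le hu_sq]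

lemma cosh_sub_cosh_le_exp_sub_mul {R s : ℝ} (hR : 0 ≤ R) (h : R ≤ s) (d : ℝ) :
    cosh R - cosh d ≤ exp (R - s) * (cosh s - cosh d) := by
  have hu : exp (R - s) ≤ 1 := exp_le_one_iff.2 (by linarith)
  have heR : exp (-R) ≤ 1 := exp_le_one_iff.2 (by linarith)
  have hkey : 0 ≤ (1 - exp (R - s)) * (cosh d - exp (-R) * (1 + exp (R - s)) / 2) :=
    mul_nonneg (by linarith) (by nlinarith [one_le_cosh d, exp_pos (-R)])
  linarith [cosh_sub_exp_sub_mul_cosh R s]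

noncomputable def hyperbolicCosAngle (R r₁ r₂ : ℝ) : ℝ :=
  (cosh r₁ * cosh r₂ - cosh R) / (sinh r₁ * sinh r₂)

lemma two_mul_sinh_mul_sinh (r₁ r₂ : ℝ) :
    2 * (sinh r₁ * sinh r₂) = cosh (r₁ + r₂) - cosh (r₁ - r₂) := by
  rw [cosh_add, cosh_sub]; ring

lemma one_sub_hyperbolicCosAngle {R r₁ r₂ : ℝ} (h : sinh r₁ * sinh r₂ ≠ 0) :
    1 - hyperbolicCosAngle R r₁ r₂ = (cosh R - cosh (r₁ - r₂)) / (sinh r₁ * sinh r₂) := by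
  rw [hyperbolicCosAngle, eq_div_iff h, sub_mul, div_mul_cancel₀ _ h, cosh_sub]
  ring

lemma one_sub_hyperbolicCosAngle_le {R r₁ r₂ : ℝ} (hR : 0 ≤ R) (h₁ : 0 < r₁) (h₂ : 0 < r₂)
    (hs : R ≤ r₁ + r₂) : 1 - hyperbolicCosAngle R r₁ r₂ ≤ 2 * exp (R - r₁ - r₂) := by
  have hS := mul_pos (sinh_pos_iff.2 h₁) (sinh_pos_iff.2 h₂)
  rw [one_sub_hyperbolicCosAngle hS.ne', div_le_iff₀ hS, sub_sub R]
  have hbound := cosh_sub_cosh_le_exp_sub_mul hR hs (r₁ - r₂)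
  rw [← two_mul_sinh_mul_sinh] at hbound
  linarith

lemma exp_div_two_le_one_sub_hyperbolicCosAngle {R r₁ r₂ : ℝ} (h₁ : 0 < r₁) (h₂ : 0 < r₂)
    (hs : R ≤ r₁ + r₂) (hd : 4 * cosh (r₁ - r₂) ≤ 3 * cosh R) :
    exp (R - r₁ - r₂) / 2 ≤ 1 - hyperbolicCosAngle R r₁ r₂ := by
  have hS := mul_pos (sinh_pos_iff.2 h₁) (sinh_pos_iff.2 h₂)
  rw [one_sub_hyperbolicCosAngle hS.ne', le_div_iff₀ hS, sub_sub R]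
  have hprod : exp (R - (r₁ + r₂)) * (2 * (sinh r₁ * sinh r₂)) =
      exp (R - (r₁ + r₂)) * (cosh (r₁ + r₂) - cosh (r₁ - r₂)) := by
    rw [two_mul_sinh_mul_sinh]
  linarith [exp_sub_mul_cosh_le_cosh hs, mul_pos (exp_pos (R - (r₁ + r₂))) (cosh_pos (r₁ - r₂))]

theorem theta_two_sided_bound (R r₁ r₂ : ℝ) (hR : 1 ≤ R)
    (hr₁ : r₁ ∈ Set.Ioc 0 R) (hr₂ : r₂ ∈ Set.Ioc 0 R) (hsum : R ≤ r₁ + r₂)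
    (hdiff : |r₁ - r₂| ≤ R - 1) :
    Real.sqrt (Real.exp (R - r₁ - r₂)) ≤
        Real.arccos ((Real.cosh r₁ * Real.cosh r₂ - Real.cosh R) /
          (Real.sinh r₁ * Real.sinh r₂)) ∧
      Real.arccos ((Real.cosh r₁ * Real.cosh r₂ - Real.cosh R) /
          (Real.sinh r₁ * Real.sinh r₂)) ≤
        Real.pi * Real.sqrt (Real.exp (R - r₁ - r₂)) := by
  obtain ⟨h₁, -⟩ := hr₁
  obtain ⟨h₂, -⟩ := hr₂
  have hlower := exp_div_two_le_one_sub_hyperbolicCosAngle h₁ h₂ hsum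
    (four_mul_cosh_le_three_mul_cosh hR hdiff)
  have hupper := one_sub_hyperbolicCosAngle_le (by linarith) h₁ h₂ hsum
  have ht₀ : 0 ≤ √(exp (R - r₁ - r₂)) := sqrt_nonneg _
  have ht₁ : √(exp (R - r₁ - r₂)) ≤ 1 := sqrt_le_one.2 (exp_le_one_iff.2 (by linarith))
  rw [← sq_sqrt (exp_pos (R - r₁ - r₂)).le] at hlower hupper
  exact ⟨le_arccos_of_sq_div_two_le_one_sub ht₀ (ht₁.trans (by linarith [pi_gt_three])) hlower,
    arccos_le_pi_mul_of_one_sub_le_two_mul_sq ht₀ ht₁ hupper⟩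
end

section
/- For every x with 0 ≤ x ≤ 1 and every ρ ∈ (0, 1/2] with x ≤ 2ρ, arsinh(x) ≥ (1 − ρ/(1 + 4ρ²)^{3/2})·x. -/
/-!
The derivative of `arsinh t + t³/6 - t` is `(1 + t²)^(-1/2) - 1 + t²/2 ≥ 0`, so
`arsinh x ≥ x - x³/6` for `x ≥ 0`. The cubic error is absorbed because
`x² (1 + 4ρ²)^(3/2) ≤ 2ρ · 2^(3/2) ≤ 6ρ`.
-/

open Real

lemma one_sub_half_le_inv_sqrt_one_add {u : ℝ} (hu : 0 ≤ u) : 1 - u / 2 ≤ (√(1 + u))⁻¹ := by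
  have hs : 0 < √(1 + u) := sqrt_pos.2 (by linarith)
  have hsq : √(1 + u) ^ 2 = 1 + u := sq_sqrt (by linarith)
  rw [← one_div, le_div_iff₀ hs]
  rcases le_or_gt 2 u with hu2 | hu2
  · nlinarith
  -- `((1 - u/2) √(1+u))² = 1 - u²(3 - u)/4 ≤ 1` for `u < 2`.
  · nlinarith [sq_nonneg ((1 - u / 2) * √(1 + u) - 1), mul_nonneg (sq_nonneg u) hu]

lemma hasDerivAt_arsinh_add_cube_div_six_sub (t : ℝ) :
    HasDerivAt (fun t => arsinh t + t ^ 3 / 6 - t) ((√(1 + t ^ 2))⁻¹ + t ^ 2 / 2 - 1) t := by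
  have hcube : HasDerivAt (fun t : ℝ => t ^ 3 / 6) (t ^ 2 / 2) t :=
    ((hasDerivAt_pow 3 t).div_const 6).congr_deriv (by norm_num; ring)
  exact ((hasDerivAt_arsinh t).add hcube).sub (hasDerivAt_id t)

lemma monotone_arsinh_add_cube_div_six_sub : Monotone fun t : ℝ => arsinh t + t ^ 3 / 6 - t := by
  refine monotone_of_deriv_nonneg
    (fun t => (hasDerivAt_arsinh_add_cube_div_six_sub t).differentiableAt) fun t => ?_
  rw [(hasDerivAt_arsinh_add_cube_div_six_sub t).deriv]
  linarith [one_sub_half_le_inv_sqrt_one_add (sq_nonneg t)]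

lemma sub_cube_div_six_le_arsinh {x : ℝ} (hx : 0 ≤ x) : x - x ^ 3 / 6 ≤ arsinh x := by
  have := monotone_arsinh_add_cube_div_six_sub hx
  simp only [arsinh_zero] at this
  linarith

lemma rpow_three_halves_le_three {a : ℝ} (ha0 : 0 ≤ a) (ha2 : a ≤ 2) : a ^ ((3 : ℝ) / 2) ≤ 3 := by
  have hsqrt : √a ≤ 3 / 2 := sqrt_le_iff.2 ⟨by norm_num, by linarith⟩
  calc a ^ ((3 : ℝ) / 2) = a * √a := by
        rw [sqrt_eq_rpow, ← rpow_one_add' ha0 (by norm_num)]; norm_num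
    _ ≤ 2 * (3 / 2) := by gcongr
    _ = 3 := by norm_num

theorem arsinh_taylor_lower_bound_general (x ρ : ℝ) (hx0 : 0 ≤ x) (hx1 : x ≤ 1)
    (hρ : ρ ≤ 1 / 2) (hxρ : x ≤ 2 * ρ) :
    (1 - ρ / (1 + 4 * ρ ^ 2) ^ ((3 : ℝ) / 2)) * x ≤ Real.arsinh x := by
  set c := (1 + 4 * ρ ^ 2) ^ ((3 : ℝ) / 2)
  have hc0 : 0 < c := by positivity
  have hc3 : c ≤ 3 := rpow_three_halves_le_three (by positivity) (by nlinarith)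
  have hx2 : x ^ 2 * c ≤ 6 * ρ := by nlinarith [mul_le_mul hx1 hxρ hx0 zero_le_one]
  have hcube : x ^ 3 / 6 ≤ ρ / c * x := by
    rw [div_mul_eq_mul_div, div_le_div_iff₀ (by norm_num) hc0]
    nlinarith
  calc (1 - ρ / c) * x = x - ρ / c * x := by ring
    _ ≤ x - x ^ 3 / 6 := by linarith
    _ ≤ arsinh x := sub_cube_div_six_le_arsinh hx0

theorem arsinh_taylor_lower_bound (x ρ : ℝ) (hx0 : 0 ≤ x) (hx1 : x ≤ 1)
    (hρ0 : 0 < ρ) (hρ : ρ ≤ 1 / 2) (hxρ : x ≤ 2 * ρ) :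
    (1 - ρ / (1 + 4 * ρ ^ 2) ^ ((3 : ℝ) / 2)) * x ≤ Real.arsinh x :=
  arsinh_taylor_lower_bound_general x ρ hx0 hx1 hρ hxρ
end

section
/- Every Euclidean unit disk graph is a hyperbolic unit disk graph: if a finite graph G admits a map φ_E : V → ℝ² and threshold R_E > 0 such that {u,v} is an edge iff ‖φ_E(u) − φ_E(v)‖ ≤ R_E, and moreover non-adjacent pairs satisfy ‖φ_E(u) − φ_E(v)‖ > τ·R_E for some fixed τ > 1, then there exist a map φ_H : V → 𝔻 into the Poincaré disk and a threshold R_H > 0 such that {u,v} is an edge iff d_𝔻(φ_H(u), φ_H(v)) ≤ R_H. -/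
/-- Hyperbolic distance in the Poincaré disk model (for points of norm `< 1`). -/
noncomputable def poincareDist (p q : EuclideanSpace ℝ (Fin 2)) : ℝ :=
  2 * Real.arsinh (‖p - q‖ / Real.sqrt ((1 - ‖p‖ ^ 2) * (1 - ‖q‖ ^ 2)))

/-!
Shrink the Euclidean representation by a common factor into the disk of radius
`r = √(1 - 1/τ)`. There the conformal factor `√((1 - ‖p‖²)(1 - ‖q‖²))` of `d_𝔻` lies in `[1/τ, 1]`,
so `2 arsinh ‖p - q‖ ≤ d_𝔻(p, q) ≤ 2 arsinh (τ ‖p - q‖)`. The gap `τ` between the Euclidean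
distances of adjacent and non-adjacent pairs absorbs this distortion, and the threshold
`R_H = 2 arsinh (τ c R_E)` separates them.
-/

open Real

lemma one_sub_sq_le_sqrt_mul_one_sub_sq {a b r : ℝ} (ha₀ : 0 ≤ a) (hb₀ : 0 ≤ b)
    (ha : a ≤ r) (hb : b ≤ r) :
    1 - r ^ 2 ≤ √((1 - a ^ 2) * (1 - b ^ 2)) := by
  rcases lt_or_ge (1 - r ^ 2) 0 with hr | hr
  · exact hr.le.trans (sqrt_nonneg _)
  have ha' : 1 - r ^ 2 ≤ 1 - a ^ 2 := by nlinarith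
  have hb' : 1 - r ^ 2 ≤ 1 - b ^ 2 := by nlinarith
  rw [← sqrt_sq hr, sq]
  exact sqrt_le_sqrt (mul_le_mul ha' hb' hr (hr.trans ha'))

lemma two_mul_arsinh_norm_sub_le_poincareDist {p q : EuclideanSpace ℝ (Fin 2)}
    (hp : ‖p‖ < 1) (hq : ‖q‖ < 1) :
    2 * arsinh ‖p - q‖ ≤ poincareDist p q := by
  have hp' : 0 < 1 - ‖p‖ ^ 2 := by nlinarith [norm_nonneg p]
  have hq' : 0 < 1 - ‖q‖ ^ 2 := by nlinarith [norm_nonneg q]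
  have hS₀ : 0 < √((1 - ‖p‖ ^ 2) * (1 - ‖q‖ ^ 2)) := sqrt_pos.mpr (mul_pos hp' hq')
  have hS₁ : √((1 - ‖p‖ ^ 2) * (1 - ‖q‖ ^ 2)) ≤ 1 :=
    sqrt_le_one.mpr (by nlinarith [sq_nonneg ‖p‖, sq_nonneg ‖q‖])
  unfold poincareDist
  gcongr
  exact (le_div_iff₀ hS₀).mpr (mul_le_of_le_one_right (norm_nonneg _) hS₁)

lemma poincareDist_le_two_mul_arsinh {p q : EuclideanSpace ℝ (Fin 2)} {r : ℝ}
    (hp : ‖p‖ ≤ r) (hq : ‖q‖ ≤ r) (hr : r < 1) :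
    poincareDist p q ≤ 2 * arsinh (‖p - q‖ / (1 - r ^ 2)) := by
  have hr' : 0 < 1 - r ^ 2 := by nlinarith [(norm_nonneg p).trans hp]
  unfold poincareDist
  gcongr
  exact one_sub_sq_le_sqrt_mul_one_sub_sq (norm_nonneg p) (norm_nonneg q) hp hq

lemma poincareDist_le_two_mul_arsinh_of_norm_sub_le {p q : EuclideanSpace ℝ (Fin 2)}
    {r ρ : ℝ} (hp : ‖p‖ ≤ r) (hq : ‖q‖ ≤ r) (hr : r < 1) (h : ‖p - q‖ ≤ ρ * (1 - r ^ 2)) :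
    poincareDist p q ≤ 2 * arsinh ρ := by
  have hr' : 0 < 1 - r ^ 2 := by nlinarith [(norm_nonneg p).trans hp]
  refine (poincareDist_le_two_mul_arsinh hp hq hr).trans ?_
  gcongr
  exact (div_le_iff₀ hr').mpr h

lemma two_mul_arsinh_lt_poincareDist_of_lt_norm_sub {p q : EuclideanSpace ℝ (Fin 2)} {ρ : ℝ}
    (hp : ‖p‖ < 1) (hq : ‖q‖ < 1) (h : ρ < ‖p - q‖) :
    2 * arsinh ρ < poincareDist p q :=
  lt_of_lt_of_le (by linarith [arsinh_lt_arsinh.mpr h])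
    (two_mul_arsinh_norm_sub_le_poincareDist hp hq)

lemma exists_pos_forall_norm_smul_le {V E : Type*} [Finite V] [SeminormedAddCommGroup E]
    [NormedSpace ℝ E] (f : V → E) {r : ℝ} (hr : 0 < r) :
    ∃ c : ℝ, 0 < c ∧ ∀ v, ‖c • f v‖ ≤ r := by
  obtain ⟨M, hM⟩ := (Set.finite_range fun v => ‖f v‖).bddAbove
  have hM' : ∀ v, ‖f v‖ ≤ |M| + 1 := fun v =>
    (hM (Set.mem_range_self v)).trans ((le_abs_self M).trans (le_add_of_nonneg_right zero_le_one))
  refine ⟨r / (|M| + 1), by positivity, fun v => ?_⟩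
  rw [norm_smul, norm_of_nonneg (by positivity), div_mul_eq_mul_div,
    div_le_iff₀ (by positivity)]
  exact mul_le_mul_of_nonneg_left (hM' v) hr.le

theorem euclidean_udg_is_hyperbolic_udg {V : Type*} [Fintype V] (G : SimpleGraph V)
    (φE : V → EuclideanSpace ℝ (Fin 2)) (R_E τ : ℝ) (hRE : 0 < R_E) (hτ : 1 < τ)
    (hrep : ∀ u v : V, u ≠ v → (G.Adj u v ↔ ‖φE u - φE v‖ ≤ R_E))
    (hgap : ∀ u v : V, u ≠ v → ¬ G.Adj u v → τ * R_E < ‖φE u - φE v‖) :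
    ∃ (φH : V → EuclideanSpace ℝ (Fin 2)) (R_H : ℝ), 0 < R_H ∧
      (∀ v : V, ‖φH v‖ < 1) ∧
      ∀ u v : V, u ≠ v → (G.Adj u v ↔ poincareDist (φH u) (φH v) ≤ R_H) := by
  have hτ₀ : 0 < τ := one_pos.trans hτ
  have hε : 0 < 1 - τ⁻¹ := sub_pos.mpr (inv_lt_one_of_one_lt₀ hτ)
  set r := √(1 - τ⁻¹)
  have hr₁ : r < 1 := (sqrt_lt' one_pos).mpr (by linarith [inv_pos.mpr hτ₀])
  have hr_sq : 1 - r ^ 2 = τ⁻¹ := by rw [sq_sqrt hε.le]; ring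
  obtain ⟨c, hc, hφ⟩ := exists_pos_forall_norm_smul_le φE (sqrt_pos.mpr hε)
  refine ⟨fun v => c • φE v, 2 * arsinh (c * R_E * τ),
    mul_pos two_pos (arsinh_pos_iff.mpr (by positivity)),
    fun v => (hφ v).trans_lt hr₁, fun u v huv => ?_⟩
  have hdist : ‖c • φE u - c • φE v‖ = c * ‖φE u - φE v‖ := by
    rw [← smul_sub, norm_smul, norm_of_nonneg hc.le]
  constructor
  · intro hadj
    refine poincareDist_le_two_mul_arsinh_of_norm_sub_le (hφ u) (hφ v) hr₁ ?_
    rw [hdist, hr_sq, mul_inv_cancel_right₀ hτ₀.ne']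
    exact mul_le_mul_of_nonneg_left ((hrep u v huv).mp hadj) hc.le
  · intro hle
    by_contra hnadj
    refine hle.not_gt (two_mul_arsinh_lt_poincareDist_of_lt_norm_sub
      ((hφ u).trans_lt hr₁) ((hφ v).trans_lt hr₁) ?_)
    rw [hdist, mul_assoc, mul_comm R_E]
    exact mul_lt_mul_of_pos_left (hgap u v huv hnadj) hc
end

section
/- Let G be a graph and 𝒞 a collection of connected subgraphs of G such that for all vertices s, t there exists G' ∈ 𝒞 containing s and t with d_{G'}(s, t) ≤ c·d_G(s, t) or d_{G'}(s, t) ≤ d_G(s, t) + ℓ. Define d_𝒞(s, t) as the minimum of d_{G'}(s, t) over subgraphs G' ∈ 𝒞 containing both s and t. Then for every s ≠ t there exists a neighbor v of s in G with d_𝒞(v, t) < d_𝒞(s, t), and consequently greedily routing with respect to d_𝒞 from s to t produces a path of length at most d_𝒞(s, t), which is at most max(c·d_G(s, t), d_G(s, t) + ℓ). -/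
open SimpleGraph in
/-- Distance with respect to a graph cover: the minimum over the subgraphs in the
cover of the shortest-path distance within the subgraph. -/
noncomputable def coverDist {V : Type*} (𝒞 : Set (SimpleGraph V)) (s t : V) : ℕ∞ :=
  ⨅ G' ∈ 𝒞, G'.edist s t

/-!
Pick a subgraph `G' ∈ 𝒞` realising `d_𝒞(s, t)` (the infimum of a family in `ℕ∞` is attained)
and a shortest `s`–`t` walk in `G'`. Its second vertex `v` is a `G`-neighbour of `s` with
`d_𝒞(v, t) ≤ d_{G'}(v, t) = d_𝒞(s, t) - 1`, so greedy routing strictly decreases `d_𝒞` at every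
step and reaches `t` after at most `d_𝒞(s, t)` hops. The bound on `d_𝒞` is the covering
hypothesis applied to the subgraph it provides.
-/

namespace SimpleGraph

variable {V : Type*} {G : SimpleGraph V} {𝒞 : Set (SimpleGraph V)} {s t : V}

lemma coverDist_le_edist {G' : SimpleGraph V} (hG' : G' ∈ 𝒞) (s t : V) :
    coverDist 𝒞 s t ≤ G'.edist s t :=
  iInf₂_le G' hG'

lemma coverDist_ne_top {G' : SimpleGraph V} (hG' : G' ∈ 𝒞) (h : G'.Reachable s t) :
    coverDist 𝒞 s t ≠ ⊤ :=
  ne_top_of_le_ne_top (edist_ne_top_iff_reachable.mpr h) (coverDist_le_edist hG' s t)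

lemma exists_edist_eq_coverDist (h : coverDist 𝒞 s t ≠ ⊤) :
    ∃ G' ∈ 𝒞, G'.edist s t = coverDist 𝒞 s t := by
  have : Nonempty 𝒞 := by
    by_contra h𝒞
    simp_all [coverDist, Set.eq_empty_of_forall_notMem]
  obtain ⟨⟨G', hG'⟩, hmin⟩ := ciInf_mem fun G' : 𝒞 => G'.1.edist s t
  exact ⟨G', hG', hmin.trans (iInf_subtype'' 𝒞 fun G' => G'.edist s t)⟩

lemma exists_adj_coverDist_lt (hsub : ∀ G' ∈ 𝒞, G' ≤ G) (hst : s ≠ t)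
    (h : coverDist 𝒞 s t ≠ ⊤) : ∃ v, G.Adj s v ∧ coverDist 𝒞 v t < coverDist 𝒞 s t := by
  obtain ⟨G', hG', hmin⟩ := exists_edist_eq_coverDist h
  obtain ⟨p, hp⟩ := exists_walk_of_edist_ne_top (hmin ▸ h)
  cases p with
  | nil => exact absurd rfl hst
  | @cons _ v _ hadj q =>
    refine ⟨v, hsub G' hG' hadj, ?_⟩
    calc coverDist 𝒞 v t ≤ q.length := (coverDist_le_edist hG' v t).trans q.edist_le
      _ < q.length + 1 := ENat.lt_add_one_iff (ENat.natCast_ne_top _) |>.mpr le_rfl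
      _ = coverDist 𝒞 s t := by rw [← hmin, ← hp, Walk.length_cons, Nat.cast_succ]

lemma exists_walk_length_le_coverDist (hsub : ∀ G' ∈ 𝒞, G' ≤ G)
    (h : coverDist 𝒞 s t ≠ ⊤) : ∃ p : G.Walk s t, (p.length : ℕ∞) ≤ coverDist 𝒞 s t := by
  induction hd : coverDist 𝒞 s t using WellFoundedLT.induction generalizing s with
  | _ d ih =>
  subst hd
  by_cases hst : s = t
  · subst hst
    exact ⟨Walk.nil, by simp⟩
  obtain ⟨v, hadj, hlt⟩ := exists_adj_coverDist_lt hsub hst h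
  obtain ⟨q, hq⟩ := ih _ hlt (hlt.trans_le le_top).ne rfl
  refine ⟨Walk.cons hadj q, ?_⟩
  calc ((Walk.cons hadj q).length : ℕ∞) = q.length + 1 := by simp
    _ ≤ coverDist 𝒞 v t + 1 := by gcongr
    _ ≤ coverDist 𝒞 s t := Order.add_one_le_of_lt hlt

end SimpleGraph

open SimpleGraph in
theorem greedy_routing_graph_cover {V : Type*} (G : SimpleGraph V)
    (𝒞 : Set (SimpleGraph V)) (hsub : ∀ G' ∈ 𝒞, G' ≤ G) (c ℓ : ℕ)
    (hcover : ∀ s t : V, ∃ G' ∈ 𝒞, G'.Reachable s t ∧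
      (G'.edist s t ≤ c * G.edist s t ∨ G'.edist s t ≤ G.edist s t + ℓ)) :
    (∀ s t : V, s ≠ t → ∃ v : V, G.Adj s v ∧ coverDist 𝒞 v t < coverDist 𝒞 s t) ∧
    (∀ s t : V, ∃ p : G.Walk s t, (p.length : ℕ∞) ≤ coverDist 𝒞 s t) ∧
    (∀ s t : V, coverDist 𝒞 s t ≤ max (c * G.edist s t) (G.edist s t + ℓ)) := by
  have hfin (s t : V) : coverDist 𝒞 s t ≠ ⊤ := by
    obtain ⟨G', hG', hreach, -⟩ := hcover s t
    exact coverDist_ne_top hG' hreach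
  refine ⟨fun s t hst => exists_adj_coverDist_lt hsub hst (hfin s t),
    fun s t => exists_walk_length_le_coverDist hsub (hfin s t), fun s t => ?_⟩
  obtain ⟨G', hG', -, hbound⟩ := hcover s t
  exact (coverDist_le_edist hG' s t).trans (hbound.elim le_max_of_le_left le_max_of_le_right)
end

section
/- Let G be a graph, u, v vertices, and H an induced subgraph of G containing all vertices of some shortest u-v path P in G. Let T be a shortest-path tree in H rooted at a vertex t such that T contains u and v and distances in T from t agree with distances in H. Then for every vertex w of T lying on P, d_T(u, v) ≤ d_G(u, v) + 2·d_H(t, w). -/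
/-!
Go from `u` to `v` in `T` through the root `t`: since `T` measures distances from `t`
exactly as `H` does, `d_T(u, v) ≤ d_H(t, u) + d_H(t, v)`, and each of these is at most
`d_H(t, w)` plus the distance from `w` along `P`. The two pieces of `P` on either side of `w` lie
in `H` because `H` is induced, and their lengths add up to `d_G(u, v)`.
-/

namespace SimpleGraph

variable {V : Type*} {G H : SimpleGraph V} {S : Set V} {u v w : V}

theorem Walk.edist_le_length_of_support_subset
    (hGH : ∀ x y, x ∈ S → y ∈ S → G.Adj x y → H.Adj x y)
    (p : G.Walk u v) (hp : ∀ x ∈ p.support, x ∈ S) :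
    H.edist u v ≤ p.length := by
  have hedges : ∀ e ∈ p.edges, e ∈ H.edgeSet := by
    intro e he
    induction e using Sym2.ind with
    | _ x y =>
      exact hGH x y (hp x (p.fst_mem_support_of_mem_edges he))
        (hp y (p.snd_mem_support_of_mem_edges he)) (p.adj_of_mem_edges he)
  simpa only [Walk.length_transfer] using (p.transfer H hedges).edist_le

theorem Walk.edist_add_edist_le_length_of_support_subset
    (hGH : ∀ x y, x ∈ S → y ∈ S → G.Adj x y → H.Adj x y)
    (p : G.Walk u v) (hp : ∀ x ∈ p.support, x ∈ S) (hw : w ∈ p.support) :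
    H.edist u w + H.edist w v ≤ p.length := by
  classical
  have hlength : p.length = (p.takeUntil w hw).length + (p.dropUntil w hw).length := by
    rw [← Walk.length_append, p.take_spec hw]
  rw [hlength, Nat.cast_add]
  exact add_le_add
    ((p.takeUntil w hw).edist_le_length_of_support_subset hGH
      fun x hx => hp x (p.support_takeUntil_subset_support hw hx))
    ((p.dropUntil w hw).edist_le_length_of_support_subset hGH
      fun x hx => hp x (p.support_dropUntil_subset_support hw hx))

end SimpleGraph

open SimpleGraph in
theorem shortest_path_tree_detour_bound_general {V : Type*} (G : SimpleGraph V) (S : Set V)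
    (H : SimpleGraph V)
    (hH : ∀ x y : V, H.Adj x y ↔ x ∈ S ∧ y ∈ S ∧ G.Adj x y)  -- `H` is induced on `S`
    (u v t w : V) (P : G.Walk u v)
    (hP : (P.length : ℕ∞) = G.edist u v)                      -- `P` is a shortest `u`-`v` path
    (hPS : ∀ x ∈ P.support, x ∈ S)                            -- `H` contains all vertices of `P`
    (T : SimpleGraph V)
    (htu : T.Reachable t u) (htv : T.Reachable t v)           -- `T` contains `u` and `v`
    (hagree : ∀ x : V, T.Reachable t x → T.edist t x = H.edist t x)
    (hw : w ∈ P.support) :                                    -- `w` lies on `P`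
    T.edist u v ≤ G.edist u v + 2 * H.edist t w := by
  have hGH : ∀ x y, x ∈ S → y ∈ S → G.Adj x y → H.Adj x y :=
    fun x y hx hy hxy => (hH x y).2 ⟨hx, hy, hxy⟩
  calc T.edist u v ≤ T.edist t u + T.edist t v := by
        rw [T.edist_comm (u := t) (v := u)]; exact SimpleGraph.edist_triangle
    _ = H.edist t u + H.edist t v := by rw [hagree u htu, hagree v htv]
    _ ≤ (H.edist t w + H.edist w u) + (H.edist t w + H.edist w v) :=
      add_le_add SimpleGraph.edist_triangle SimpleGraph.edist_triangle
    _ = H.edist u w + H.edist w v + 2 * H.edist t w := by rw [edist_comm (u := w)]; ring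
    _ ≤ G.edist u v + 2 * H.edist t w := by
      rw [← hP]
      gcongr
      exact P.edist_add_edist_le_length_of_support_subset hGH hPS hw

open SimpleGraph in
theorem shortest_path_tree_detour_bound {V : Type*} (G : SimpleGraph V) (S : Set V)
    (H : SimpleGraph V)
    (hH : ∀ x y : V, H.Adj x y ↔ x ∈ S ∧ y ∈ S ∧ G.Adj x y)  -- `H` is induced on `S`
    (u v t w : V) (P : G.Walk u v)
    (hP : (P.length : ℕ∞) = G.edist u v)                      -- `P` is a shortest `u`-`v` path
    (hPS : ∀ x ∈ P.support, x ∈ S)                            -- `H` contains all vertices of `P`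
    (T : SimpleGraph V) (hTH : T ≤ H) (hacyclic : T.IsAcyclic)
    (htu : T.Reachable t u) (htv : T.Reachable t v)           -- `T` contains `u` and `v`
    (hagree : ∀ x : V, T.Reachable t x → T.edist t x = H.edist t x)
    (hw : w ∈ P.support) (htw : T.Reachable t w) :            -- `w` lies in `T` and on `P`
    T.edist u v ≤ G.edist u v + 2 * H.edist t w :=
  shortest_path_tree_detour_bound_general G S H hH u v t w P hP hPS T htu htv hagree hw
end
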